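/- arXiv:1111.1823 — 3 statements merged into one kernel-verified Lean document; each statement's English description precedes it below -/
import Mathlib

section
/- Let s = ψ_X(x₁x₂⋯xₙ⋯) be an X-AR word with xᵢ ∈ X, let B be an alphabet with a bijection μ : B → X, and let z = x₁⋯x_m be such that ψ_X(z) is full. Define the morphism φ_z : B* → A* by φ_z(b) = ψ_X(zμ(b)) ψ_X(z)^{-1} for each b ∈ B (the word obtained from ψ_X(zμ(b)) by erasing its suffix ψ_X(z)). Then for every w ∈ B*, ψ_X(zμ(w)) = φ_z(ψ(w)) ψ_X(z), where ψ is the palindromization map over B* and μ is extended to a morphism from B* to X*. -/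
open List

/-- Right palindromic closure: `w⁺ = u Q u~` where `Q` is the longest palindromic
suffix of `w = uQ`; equivalently the shortest palindrome having `w` as a prefix. -/
noncomputable def palClosure {A : Type*} (w : List A) : List A :=
  letI : DecidablePred fun k => (w.drop k).reverse = w.drop k :=
    fun _ => Classical.propDecidable _
  w ++ (w.take (Nat.find (⟨w.length, by simp⟩ :
    ∃ k, (w.drop k).reverse = w.drop k))).reverse

/-- The palindromization map `ψ_X` relative to a code `X`, evaluated on the
(unique) `X`-factorization `l = [x₁, …, xₙ]` of a word of `X*`. -/
noncomputable def psiList {A : Type*} (l : List (List A)) : List A :=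
  l.foldl (fun p x => palClosure (p ++ x)) []

/-- The (usual) palindromization map `ψ` on words, letter by letter. -/
noncomputable def psiWord {A : Type*} (w : List A) : List A :=
  w.foldl (fun p a => palClosure (p ++ [a])) []

/-- `X` is a code: nonempty words with unique factorization over `X`. -/
def IsCode {A : Type*} (X : Set (List A)) : Prop :=
  (∀ x ∈ X, x ≠ []) ∧
  ∀ l l' : List (List A), (∀ w ∈ l, w ∈ X) → (∀ w ∈ l', w ∈ X) →
    l.flatten = l'.flatten → l = l'

/-- `X` is a prefix code: nonempty words, none a proper prefix of another. -/
def IsPrefixCode {A : Type*} (X : Set (List A)) : Prop :=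
  (∀ x ∈ X, x ≠ []) ∧ ∀ x ∈ X, ∀ y ∈ X, x <+: y → x = y

/-- `X` is a maximal prefix code over `A`. -/
def IsMaximalPrefixCode {A : Type*} (X : Set (List A)) : Prop :=
  IsPrefixCode X ∧ ∀ Y : Set (List A), IsPrefixCode Y → X ⊆ Y → X = Y

/-- `w ∈ X*`. -/
def InStar {A : Type*} (X : Set (List A)) (w : List A) : Prop :=
  ∃ l : List (List A), (∀ u ∈ l, u ∈ X) ∧ l.flatten = w

/-- The finite word `w` is a prefix of the infinite word `s`. -/
def PrefixOfInf {A : Type*} (w : List A) (s : ℕ → A) : Prop :=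
  ∀ i : ℕ, ∀ h : i < w.length, w.get ⟨i, h⟩ = s i

/-- The finite word `w` is a factor of the infinite word `s`. -/
def FactorOfInf {A : Type*} (w : List A) (s : ℕ → A) : Prop :=
  ∃ i : ℕ, w = List.ofFn fun k : Fin w.length => s (i + k.1)

/-- `X` has finite deciphering delay. -/
def FiniteDecipheringDelay {A : Type*} (X : Set (List A)) : Prop :=
  ∃ k : ℕ, ∀ x ∈ X, ∀ x' ∈ X,
    (∃ (l l' : List (List A)) (r : List A),
      (∀ w ∈ l, w ∈ X) ∧ l.length = k ∧ (∀ w ∈ l', w ∈ X) ∧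
      x ++ l.flatten ++ r = x' ++ l'.flatten) → x = x'

/-- The sequence `y = y₁y₂⋯ ∈ X^ω` is alternating. -/
def Alternating {A : Type*} (y : ℕ → List A) : Prop :=
  ∃ a b : A, a ≠ b ∧ ∃ (lam : List A) (idx : ℕ → ℕ), StrictMono idx ∧
    ∀ k : ℕ, (lam ++ [a]) <+: y (idx (2 * k)) ∧ (lam ++ [b]) <+: y (idx (2 * k + 1))

/-- The infinite word `s` is ultimately periodic. -/
def UltimatelyPeriodic {A : Type*} (s : ℕ → A) : Prop :=
  ∃ p : ℕ, 0 < p ∧ ∃ N : ℕ, ∀ n ≥ N, s (n + p) = s n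

/-- The infinite word `s` is uniformly recurrent: every factor occurs in every
sufficiently long factor of `s`. -/
def UniformlyRecurrent {A : Type*} (s : ℕ → A) : Prop :=
  ∀ w : List A, FactorOfInf w s →
    ∃ N : ℕ, ∀ i : ℕ, w <:+: List.ofFn fun k : Fin N => s (i + k.1)

/-- Factor complexity of the infinite word `s`. -/
noncomputable def complexity {A : Type*} (s : ℕ → A) (n : ℕ) : ℕ :=
  {u : List A | u.length = n ∧ FactorOfInf u s}.ncard

/-- A word `w` is primitive if it is not a proper power. -/
def Primitive {A : Type*} (w : List A) : Prop :=
  ∀ (v : List A) (n : ℕ), 1 < n → w ≠ (List.replicate n v).flatten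

/-- `p` is a period of the word `w`. -/
def IsPeriodOf {A : Type*} (p : ℕ) (w : List A) : Prop :=
  0 < p ∧ ∀ i : ℕ, ∀ h : i + p < w.length,
    w.get ⟨i, by omega⟩ = w.get ⟨i + p, h⟩

/-- `ψ_X(x₁⋯x_m)` (given by the factorization `l = [x₁,…,x_m]`) is *full*:
(F1) every `x ∈ X` occurs in `l`; (F2) the minimal period of `ψ_X(l)` is at
least `ℓ_X = max_{x∈X} |x|`; (F3) for each `x ∈ X`, the longest palindromic
prefix of `ψ_X(l)` followed by `x` is `ψ_X(x₁⋯x_{r_x−1})`, where `r_x` is the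
last position of `x` in `l`. -/
def Full {A : Type*} (X : Set (List A)) (l : List (List A)) : Prop :=
  (∀ x ∈ X, x ∈ l) ∧
  (∀ p : ℕ, IsPeriodOf p (psiList l) → ∀ x ∈ X, x.length ≤ p) ∧
  (∀ x ∈ X, ∃ r : Fin l.length, l.get r = x ∧
    (∀ r' : Fin l.length, l.get r' = x → r'.1 ≤ r.1) ∧
    psiList (l.take r.1) ++ x <+: psiList l ∧
    ∀ P : List A, P.reverse = P → P ++ x <+: psiList l →
      P.length ≤ (psiList (l.take r.1)).length)

/-!
Both `ψ(wb)` and `ψ_X(zμ(w)μ(b))` are palindromic closures of a palindrome followed by a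
letter (resp. a block), and the closure `(Vx)⁺` of a palindrome `V = PxS`, where `P` is the
longest palindromic prefix of `V` followed by `x`, is `VxS`. Condition (F2) forces every
palindromic prefix of `ψ_X(zμ(w))` at least as long as `ψ_X(z)` to be some `ψ_X(zμ(w'))` with
`w'` a prefix of `w`, and since `X` is a prefix code the block following it is `μ` of the letter
following `w'`. Hence, if `b` occurs in `w`, the relevant prefixes on both sides correspond to the
last occurrence of `b`, and otherwise (F3) identifies the one of `ψ_X(zμ(w))` inside `ψ_X(z)`.
In both cases the formula for `wb` follows by induction on `w`.
-/

section PalindromicClosure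

variable {A : Type*}

theorem palClosure_eq_of_minimal {w : List A} {k : ℕ}
    (hk : (w.drop k).reverse = w.drop k)
    (hmin : ∀ j < k, (w.drop j).reverse ≠ w.drop j) :
    palClosure w = w ++ (w.take k).reverse := by
  let : DecidablePred fun k => (w.drop k).reverse = w.drop k :=
    fun _ => Classical.propDecidable _
  unfold palClosure
  congr 3
  exact (Nat.find_eq_iff _).mpr ⟨hk, hmin⟩

theorem exists_palClosure_eq (w : List A) :
    ∃ k ≤ w.length, (w.drop k).reverse = w.drop k ∧
      (∀ j < k, (w.drop j).reverse ≠ w.drop j) ∧ palClosure w = w ++ (w.take k).reverse := by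
  classical
  have hex : ∃ k, (w.drop k).reverse = w.drop k := ⟨w.length, by simp⟩
  have hmin : ∀ j < Nat.find hex, (w.drop j).reverse ≠ w.drop j := fun j hj => Nat.find_min hex hj
  exact ⟨Nat.find hex, Nat.find_le (by simp), Nat.find_spec hex, hmin,
    palClosure_eq_of_minimal (Nat.find_spec hex) hmin⟩

theorem prefix_palClosure (w : List A) : w <+: palClosure w := by
  obtain ⟨k, -, -, -, hw⟩ := exists_palClosure_eq w
  exact hw ▸ prefix_append _ _

theorem reverse_palClosure (w : List A) : (palClosure w).reverse = palClosure w := by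
  obtain ⟨k, -, hpal, -, hw⟩ := exists_palClosure_eq w
  have hrev : w.reverse = w.drop k ++ (w.take k).reverse := by
    conv_lhs => rw [← take_append_drop k w]
    rw [reverse_append, hpal]
  rw [hw, reverse_append, reverse_reverse, hrev, ← append_assoc, take_append_drop]

theorem length_palClosure_le {w T : List A} (hT : T.reverse = T) (hw : w <+: T) :
    (palClosure w).length ≤ T.length := by
  obtain ⟨R, rfl⟩ := hw
  obtain ⟨k, hk, -, hmin, hpc⟩ := exists_palClosure_eq w
  have hlen : (palClosure w).length = w.length + k := by
    rw [hpc]; simp [Nat.min_eq_left hk]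
  rw [hlen, length_append]
  by_contra! hR
  -- the central factor `w.drop |R|` of the palindrome `wR` is a palindrome shorter than the
  -- longest palindromic suffix of `w`
  have h1 : w.drop R.length ++ R = w.reverse := by
    have h := congrArg (drop R.length) (show w ++ R = R.reverse ++ w.reverse by simpa using hT.symm)
    rwa [drop_append_of_le_length (by omega), drop_left' (by simp)] at h
  have h2 : w.drop R.length = w.reverse.take (w.length - R.length) := by
    rw [← h1, take_append_of_le_length (by simp), take_of_length_le (by simp)]
  have hpal : (w.drop R.length).reverse = w.drop R.length := by
    rw [h2, reverse_take, reverse_reverse, length_reverse, ← h2]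
    congr 1
    omega
  exact hmin R.length (by omega) hpal

end PalindromicClosure

section LongestPalindromicPrefix

variable {A : Type*}

structure IsMaxPalPrefixBefore (V x P : List A) : Prop where
  reverse_eq : P.reverse = P
  append_prefix : P ++ x <+: V
  length_le : ∀ Q : List A, Q.reverse = Q → Q ++ x <+: V → Q.length ≤ P.length

/-- A palindromic suffix `Dx` of `Vx` with `|D| ≥ |x|` has the form `x̃Ux`. -/
theorem exists_pal_append_prefix_of_pal_drop {V x : List A} {k : ℕ} (hV : V.reverse = V)
    (hk : k + x.length ≤ V.length) (hpal : ((V ++ x).drop k).reverse = (V ++ x).drop k) :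
    ∃ U : List A, U.reverse = U ∧ U ++ x <+: V ∧ U.length + x.length + k = V.length := by
  have hDlen : (V.drop k).length = V.length - k := length_drop
  rw [drop_append_of_le_length (by omega), reverse_append] at hpal
  have hDx : (V.drop k).take x.length = x.reverse := by
    have h := congrArg (take x.length) hpal
    rwa [take_left' (by simp), take_append_of_le_length (by omega), eq_comm] at h
  obtain ⟨U, hDU⟩ : ∃ U, V.drop k = x.reverse ++ U :=
    ⟨_, (hDx ▸ take_append_drop x.length (V.drop k)).symm⟩
  have hU : U.reverse = U := by
    rw [hDU] at hpal
    simpa using hpal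
  have hUlen : U.length + x.length = V.length - k := by
    simpa [hDU, add_comm] using hDlen
  refine ⟨U, hU, ?_, by omega⟩
  have hUx : U ++ x = V.take (V.length - k) := by
    have h := reverse_drop (l := V) (i := k)
    rwa [hV, hDU, reverse_append, reverse_reverse, hU] at h
  exact hUx ▸ take_prefix _ _

/-- For `V = PxS` the longest palindromic suffix of `Vx` is `x̃Px`. -/
theorem palClosure_append_of_isMaxPalPrefixBefore {V x P : List A} (hV : V.reverse = V)
    (hx : x ≠ []) (hP : IsMaxPalPrefixBefore V x P) :
    palClosure (V ++ x) = V ++ x ++ V.drop (P ++ x).length := by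
  set S := V.drop (P ++ x).length
  have hVS : V = P ++ x ++ S := (prefix_iff_eq_append.mp hP.append_prefix).symm
  have hVrev : V = S.reverse ++ (x.reverse ++ P) := by
    conv_lhs => rw [← hV, hVS]
    simp [hP.reverse_eq]
  have hVlen : V.length = P.length + x.length + S.length := by
    rw [hVS]; simp only [length_append]
  have hxlen : 0 < x.length := length_pos_iff.mpr hx
  rw [palClosure_eq_of_minimal (k := S.length)]
  · rw [take_append_of_le_length (by omega), hVrev, take_left' (by simp), reverse_reverse]
  · rw [drop_append_of_le_length (by omega), hVrev, drop_left' (by simp)]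
    simp [hP.reverse_eq]
  · intro j hj hpal
    obtain ⟨U, hU, hUx, hUlen⟩ := exists_pal_append_prefix_of_pal_drop hV (by omega) hpal
    have := hP.length_le U hU hUx
    omega

theorem palClosure_append_singleton_of_forall_not {V : List A} {b : A} (hV : V.reverse = V)
    (hnone : ∀ Q : List A, Q.reverse = Q → ¬ Q ++ [b] <+: V) :
    palClosure (V ++ [b]) = V ++ [b] ++ V := by
  rw [palClosure_eq_of_minimal (k := V.length)]
  · rw [take_left' rfl, hV]
  · rw [drop_left' rfl]; rfl
  · intro j hj hpal
    obtain ⟨U, hU, hUb, -⟩ := exists_pal_append_prefix_of_pal_drop hV (by rw [length_singleton]; omega) hpal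
    exact hnone U hU hUb

end LongestPalindromicPrefix

section Palindromization

variable {A : Type*}

theorem psiList_snoc (l : List (List A)) (x : List A) :
    psiList (l ++ [x]) = palClosure (psiList l ++ x) := by
  simp [psiList, foldl_append]

theorem reverse_psiList (l : List (List A)) : (psiList l).reverse = psiList l := by
  induction l using List.reverseRecOn with
  | nil => simp [psiList]
  | append_singleton l x _ => rw [psiList_snoc]; exact reverse_palClosure _

theorem psiList_prefix_psiList_append (l t : List (List A)) :
    psiList l <+: psiList (l ++ t) := by
  induction t using List.reverseRecOn with
  | nil => simp
  | append_singleton t x ih =>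
      rw [← append_assoc, psiList_snoc]
      exact ih.trans ((prefix_append _ _).trans (prefix_palClosure _))

theorem psiList_append_take_prefix (l t : List (List A)) (j : ℕ) :
    psiList (l ++ t.take j) <+: psiList (l ++ t) := by
  conv_rhs => rw [← take_append_drop j t, ← append_assoc]
  exact psiList_prefix_psiList_append _ _

theorem psiList_append_map_take_append_prefix {B : Type*} (l : List (List A)) (μ : B → List A)
    {w : List B} {j : ℕ} (hj : j < w.length) :
    psiList (l ++ (w.take j).map μ) ++ μ w[j] <+: psiList (l ++ w.map μ) := by
  have h : psiList (l ++ (w.take (j + 1)).map μ) =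
      palClosure (psiList (l ++ (w.take j).map μ) ++ μ w[j]) := by
    rw [take_succ_eq_append_getElem hj, map_append, ← append_assoc, map_singleton, psiList_snoc]
  refine (h ▸ prefix_palClosure _).trans ?_
  rw [map_take]
  exact psiList_append_take_prefix _ _ _

theorem psiWord_eq_psiList (w : List A) : psiWord w = psiList (w.map fun b => [b]) := by
  rw [psiWord, psiList, foldl_map]

theorem reverse_psiWord (w : List A) : (psiWord w).reverse = psiWord w := by
  rw [psiWord_eq_psiList]; exact reverse_psiList _

theorem psiWord_snoc (w : List A) (b : A) :
    psiWord (w ++ [b]) = palClosure (psiWord w ++ [b]) := by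
  simp [psiWord, foldl_append]

end Palindromization

section Periods

variable {A : Type*}

theorem drop_length_sub_of_pal_prefix {U T : List A} (hU : U.reverse = U)
    (hT : T.reverse = T) (hUT : U <+: T) : T.drop (T.length - U.length) = U := by
  rw [← hT, drop_reverse, hT, Nat.sub_sub_self hUT.length_le, ← prefix_iff_eq_take.mp hUT, hU]

theorem isPeriodOf_length_sub_of_pal_prefix {U T : List A} (hU : U.reverse = U)
    (hT : T.reverse = T) (hUT : U <+: T) (hlt : U.length < T.length) :
    IsPeriodOf (T.length - U.length) T := by
  refine ⟨by omega, fun i h => ?_⟩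
  have hdrop := drop_length_sub_of_pal_prefix hU hT hUT
  have hiU : i < U.length := by omega
  simp only [get_eq_getElem]
  calc T[i] = U[i] := (hUT.getElem hiU).symm
    _ = (T.drop (T.length - U.length))[i]'(by simpa [hdrop] using hiU) := by
        simp only [hdrop]
    _ = T[i + (T.length - U.length)] := by rw [getElem_drop]; congr 1; omega

theorem IsPeriodOf.of_prefix {p : ℕ} {Z T : List A} (h : IsPeriodOf p T) (hZT : Z <+: T) :
    IsPeriodOf p Z := by
  refine ⟨h.1, fun i hi => ?_⟩
  have hle := hZT.length_le
  simp only [get_eq_getElem] at h ⊢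
  rw [hZT.getElem (by omega), hZT.getElem hi]
  exact h.2 i (by omega)

/-- A palindromic prefix `Q` of the palindrome `Z` gives `Z` the period `|Z| - |Q|`. -/
theorem append_prefix_of_pal_prefix_of_isPeriodOf {Z W Q x : List A} (hZ : Z.reverse = Z)
    (hQ : Q.reverse = Q) (hZW : Z <+: W) (hQx : Q ++ x <+: W) (hlt : Q.length < Z.length)
    (hper : ∀ p, IsPeriodOf p Z → x.length ≤ p) : Q ++ x <+: Z := by
  have hQZ : Q <+: Z := prefix_of_prefix_length_le ((prefix_append _ _).trans hQx) hZW hlt.le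
  have hx := hper _ (isPeriodOf_length_sub_of_pal_prefix hQ hZ hQZ hlt)
  exact prefix_of_prefix_length_le hQx hZW (by simp only [length_append]; omega)

end Periods

section PalindromicPrefixes

variable {A : Type*} {X : Set (List A)} {l : List (List A)}

/-- A palindromic prefix strictly between `M = ψ_X(lu')` and `Mx` would give `ψ_X(l)` a period
shorter than `|x|`. -/
theorem exists_eq_psiList_append_take_of_pal_prefix
    (hper : ∀ p, IsPeriodOf p (psiList l) → ∀ x ∈ X, x.length ≤ p) {u : List (List A)}
    (hu : ∀ x ∈ u, x ∈ X) {T : List A} (hT : T.reverse = T) (hTu : T <+: psiList (l ++ u))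
    (hlen : (psiList l).length ≤ T.length) :
    ∃ j ≤ u.length, T = psiList (l ++ u.take j) := by
  induction u using List.reverseRecOn with
  | nil => exact ⟨0, le_rfl, by simpa using hTu.eq_of_length_le (by simpa using hlen)⟩
  | append_singleton u x ih =>
    set M := psiList (l ++ u)
    have hclosure : psiList (l ++ (u ++ [x])) = palClosure (M ++ x) := by
      rw [← append_assoc, psiList_snoc]
    rw [hclosure] at hTu
    have hM : M <+: palClosure (M ++ x) := (prefix_append M x).trans (prefix_palClosure _)
    rcases le_or_gt T.length M.length with hTM | hMlt
    · obtain ⟨j, hj, rfl⟩ :=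
        ih (fun z hz => hu z (by simp [hz])) (prefix_of_prefix_length_le hTu hM hTM)
      exact ⟨j, by rw [length_append]; omega, by rw [take_append_of_le_length hj]⟩
    rcases le_or_gt (M.length + x.length) T.length with hMxT | hTMx
    · have hMx : M ++ x <+: T :=
        prefix_of_prefix_length_le (prefix_palClosure _) hTu (by simpa using hMxT)
      refine ⟨u.length + 1, by simp, ?_⟩
      rw [take_of_length_le (by simp), hclosure]
      exact hTu.eq_of_length_le (length_palClosure_le hT hMx)
    · have hMT : M <+: T := prefix_of_prefix_length_le hM hTu hMlt.le
      have hperT := isPeriodOf_length_sub_of_pal_prefix (reverse_psiList _) hT hMT hMlt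
      have := hper _ (hperT.of_prefix ((psiList_prefix_psiList_append l u).trans hMT)) x
        (hu x (by simp))
      have hMlen : M.length = (psiList (l ++ u)).length := rfl
      omega

variable {B : Type*} {μ : B → List A}

/-- Two blocks of the prefix code `X` following the same prefix coincide. -/
theorem exists_getElem_eq_of_pal_append_prefix (hX : IsPrefixCode X) (hμX : ∀ b, μ b ∈ X)
    (hinj : Function.Injective μ) (hper : ∀ p, IsPeriodOf p (psiList l) → ∀ x ∈ X, x.length ≤ p)
    {w : List B} {b : B} {Q : List A} (hQ : Q.reverse = Q)
    (hQb : Q ++ μ b <+: psiList (l ++ w.map μ)) (hlen : (psiList l).length ≤ Q.length) :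
    ∃ j, ∃ hj : j < w.length, w[j] = b ∧ Q = psiList (l ++ (w.take j).map μ) := by
  obtain ⟨j, hj, rfl⟩ := exists_eq_psiList_append_take_of_pal_prefix hper
    (by simpa using fun b _ => hμX b) hQ ((prefix_append _ _).trans hQb) hlen
  rw [length_map] at hj
  rcases hj.lt_or_eq with hj | rfl
  · refine ⟨j, hj, hinj ?_, by rw [map_take]⟩
    have hnext := psiList_append_map_take_append_prefix l μ hj
    rw [map_take] at hnext
    rcases prefix_or_prefix_of_prefix hnext hQb with h | h
    · exact hX.2 _ (hμX _) _ (hμX _) ((prefix_append_right_inj _).mp h)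
    · exact (hX.2 _ (hμX _) _ (hμX _) ((prefix_append_right_inj _).mp h)).symm
  · have := hQb.length_le
    rw [take_of_length_le (by simp), length_append] at this
    have := length_pos_iff.mpr (hX.1 _ (hμX b))
    omega

theorem isMaxPalPrefixBefore_of_last_occurrence (hX : IsPrefixCode X) (hμX : ∀ b, μ b ∈ X)
    (hinj : Function.Injective μ) (hper : ∀ p, IsPeriodOf p (psiList l) → ∀ x ∈ X, x.length ≤ p)
    {w : List B} {i : ℕ} (hi : i < w.length)
    (hlast : ∀ j (hj : j < w.length), w[j] = w[i] → j ≤ i) :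
    IsMaxPalPrefixBefore (psiList (l ++ w.map μ)) (μ w[i]) (psiList (l ++ (w.take i).map μ)) where
  reverse_eq := reverse_psiList _
  append_prefix := psiList_append_map_take_append_prefix l μ hi
  length_le Q hQ hQb := by
    have hZ := (psiList_prefix_psiList_append l ((w.take i).map μ)).length_le
    rcases lt_or_ge Q.length (psiList l).length with hlt | hge
    · omega
    obtain ⟨j, hj, hjb, rfl⟩ := exists_getElem_eq_of_pal_append_prefix hX hμX hinj hper hQ hQb hge
    have hji := hlast j hj hjb
    rw [show (w.take j).map μ = ((w.take i).map μ).take j by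
      rw [map_take, map_take, take_take, Nat.min_eq_left hji]]
    exact (psiList_append_take_prefix _ _ _).length_le

theorem isMaxPalPrefixBefore_of_not_mem (hX : IsPrefixCode X) (hμX : ∀ b, μ b ∈ X)
    (hinj : Function.Injective μ) (hper : ∀ p, IsPeriodOf p (psiList l) → ∀ x ∈ X, x.length ≤ p)
    {w : List B} {b : B} (hb : b ∉ w) {P : List A}
    (hP : IsMaxPalPrefixBefore (psiList l) (μ b) P) :
    IsMaxPalPrefixBefore (psiList (l ++ w.map μ)) (μ b) P where
  reverse_eq := hP.reverse_eq
  append_prefix := hP.append_prefix.trans (psiList_prefix_psiList_append _ _)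
  length_le Q hQ hQb := by
    rcases lt_or_ge Q.length (psiList l).length with hlt | hge
    · exact hP.length_le Q hQ (append_prefix_of_pal_prefix_of_isPeriodOf (reverse_psiList l) hQ
        (psiList_prefix_psiList_append _ _) hQb hlt (fun p hp => hper p hp _ (hμX b)))
    · obtain ⟨j, hj, rfl, -⟩ := exists_getElem_eq_of_pal_append_prefix hX hμX hinj hper hQ hQb hge
      exact absurd (getElem_mem hj) hb

end PalindromicPrefixes

section Letters

variable {A : Type*}

theorem isPrefixCode_range_singleton : IsPrefixCode (Set.range fun a : A => [a]) := by
  refine ⟨?_, ?_⟩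
  · rintro _ ⟨a, rfl⟩; simp
  · rintro _ ⟨a, rfl⟩ _ ⟨b, rfl⟩ h
    exact h.eq_of_length rfl

theorem length_le_of_isPeriodOf_psiList_nil :
    ∀ p, IsPeriodOf p (psiList ([] : List (List A))) → ∀ x ∈ Set.range fun a : A => [a],
      x.length ≤ p := by
  rintro p hp _ ⟨a, rfl⟩
  exact hp.1

theorem isMaxPalPrefixBefore_psiWord {w : List A} {i : ℕ} (hi : i < w.length)
    (hlast : ∀ j (hj : j < w.length), w[j] = w[i] → j ≤ i) :
    IsMaxPalPrefixBefore (psiWord w) [w[i]] (psiWord (w.take i)) := by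
  simpa only [nil_append, ← psiWord_eq_psiList] using
    isMaxPalPrefixBefore_of_last_occurrence (l := []) isPrefixCode_range_singleton
      (fun a => Set.mem_range_self a) (fun _ _ h => List.singleton_injective h)
      length_le_of_isPeriodOf_psiList_nil hi hlast

theorem not_pal_append_prefix_psiWord {w : List A} {a : A} (ha : a ∉ w) {Q : List A}
    (hQ : Q.reverse = Q) : ¬ Q ++ [a] <+: psiWord w := by
  intro hQa
  obtain ⟨j, hj, rfl, -⟩ := exists_getElem_eq_of_pal_append_prefix (l := [])
    (μ := fun a : A => [a]) isPrefixCode_range_singleton (fun a => Set.mem_range_self a)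
    (fun _ _ h => List.singleton_injective h) length_le_of_isPeriodOf_psiList_nil hQ
    (by rwa [nil_append, ← psiWord_eq_psiList]) (by simp [psiList])
  exact ha (getElem_mem hj)

theorem exists_last_getElem_eq {w : List A} {a : A} (ha : a ∈ w) :
    ∃ i, ∃ hi : i < w.length, w[i] = a ∧ ∀ j (hj : j < w.length), w[j] = a → j ≤ i := by
  classical
  let occ : ℕ → Prop := fun j => ∃ hj : j < w.length, w[j] = a
  obtain ⟨j, hj, hja⟩ := mem_iff_getElem.mp ha
  obtain ⟨hi, hia⟩ : occ (Nat.findGreatest occ w.length) := Nat.findGreatest_spec hj.le ⟨hj, hja⟩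
  exact ⟨_, hi, hia, fun k hk hka => Nat.le_findGreatest hk.le ⟨hk, hka⟩⟩

end Letters

theorem Full.exists_isMaxPalPrefixBefore {A : Type*} {X : Set (List A)} {l : List (List A)}
    (h : Full X l) {x : List A} (hx : x ∈ X) : ∃ P, IsMaxPalPrefixBefore (psiList l) x P := by
  obtain ⟨r, -, -, hpre, hmax⟩ := h.2.2 x hx
  exact ⟨_, reverse_psiList _, hpre, hmax⟩

section Justin

variable {A B : Type*} {X : Set (List A)} {l : List (List A)} {μ : B → List A}

/-- `φ_z(b) = ψ_X(zμ(b)) ψ_X(z)⁻¹`, the word `z ∈ X*` being given by its factorization `l`. -/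
noncomputable def justinMorphism (l : List (List A)) (μ : B → List A) (b : B) : List A :=
  (psiList (l ++ [μ b])).take ((psiList (l ++ [μ b])).length - (psiList l).length)

theorem justinMorphism_append_psiList (l : List (List A)) (μ : B → List A) (b : B) :
    justinMorphism l μ b ++ psiList l = psiList (l ++ [μ b]) := by
  rw [justinMorphism]
  nth_rw 2 [← drop_length_sub_of_pal_prefix (reverse_psiList l) (reverse_psiList _)
    (psiList_prefix_psiList_append l [μ b])]
  exact take_append_drop _ _

theorem psiList_append_map_snoc_of_last_occurrence (hX : IsPrefixCode X) (hμX : ∀ b, μ b ∈ X)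
    (hinj : Function.Injective μ) (hper : ∀ p, IsPeriodOf p (psiList l) → ∀ x ∈ X, x.length ≤ p)
    {w : List B} {i : ℕ} (hi : i < w.length)
    (hlast : ∀ j (hj : j < w.length), w[j] = w[i] → j ≤ i)
    (ih : psiList (l ++ w.map μ) = ((psiWord w).map (justinMorphism l μ)).flatten ++ psiList l)
    (ih_take : psiList (l ++ (w.take i).map μ) =
      ((psiWord (w.take i)).map (justinMorphism l μ)).flatten ++ psiList l) :
    psiList (l ++ (w ++ [w[i]]).map μ) =
      ((psiWord (w ++ [w[i]])).map (justinMorphism l μ)).flatten ++ psiList l := by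
  set φ := justinMorphism l μ
  set Z := psiList l
  have hA := isMaxPalPrefixBefore_of_last_occurrence hX hμX hinj hper hi hlast
  have hB := isMaxPalPrefixBefore_psiWord hi hlast
  rw [map_append, map_singleton, ← append_assoc, psiList_snoc,
    palClosure_append_of_isMaxPalPrefixBefore (reverse_psiList _) (hX.1 _ (hμX _)) hA,
    psiWord_snoc, palClosure_append_of_isMaxPalPrefixBefore (reverse_psiWord _) (by simp) hB]
  set W := psiList (l ++ w.map μ)
  set S := (psiWord w).drop (psiWord (w.take i) ++ [w[i]]).length
  set S' := W.drop (psiList (l ++ (w.take i).map μ) ++ μ w[i]).length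
  have hV : psiWord w = psiWord (w.take i) ++ [w[i]] ++ S :=
    (prefix_iff_eq_append.mp hB.append_prefix).symm
  have hW : W = psiList (l ++ (w.take i).map μ) ++ μ w[i] ++ S' :=
    (prefix_iff_eq_append.mp hA.append_prefix).symm
  -- comparing the two factorizations of `W` after the common prefix `φ(ψ(w.take i))`
  have hcancel : Z ++ μ w[i] ++ S' = φ w[i] ++ (S.map φ).flatten ++ Z := by
    rw [ih, hV, ih_take] at hW
    simpa using hW.symm
  calc W ++ μ w[i] ++ S' = ((psiWord w).map φ).flatten ++ (Z ++ μ w[i] ++ S') := by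
        rw [ih]; simp
    _ = _ := by
        rw [hcancel]
        simp

theorem psiList_append_map_snoc_of_not_mem (hX : IsPrefixCode X) (hμX : ∀ b, μ b ∈ X)
    (hinj : Function.Injective μ) (hper : ∀ p, IsPeriodOf p (psiList l) → ∀ x ∈ X, x.length ≤ p)
    {w : List B} {b : B} (hb : b ∉ w) {P : List A}
    (hP : IsMaxPalPrefixBefore (psiList l) (μ b) P)
    (ih : psiList (l ++ w.map μ) = ((psiWord w).map (justinMorphism l μ)).flatten ++ psiList l) :
    psiList (l ++ (w ++ [b]).map μ) =
      ((psiWord (w ++ [b])).map (justinMorphism l μ)).flatten ++ psiList l := by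
  set φ := justinMorphism l μ
  set Z := psiList l
  have hx := hX.1 _ (hμX b)
  rw [map_append, map_singleton, ← append_assoc, psiList_snoc,
    palClosure_append_of_isMaxPalPrefixBefore (reverse_psiList _) hx
      (isMaxPalPrefixBefore_of_not_mem hX hμX hinj hper hb hP),
    psiWord_snoc, palClosure_append_singleton_of_forall_not (reverse_psiWord _)
      (fun Q hQ => not_pal_append_prefix_psiWord hb hQ)]
  set W := psiList (l ++ w.map μ)
  set S := Z.drop (P ++ μ b).length
  have hφb : φ b ++ Z = Z ++ μ b ++ S := by
    rw [justinMorphism_append_psiList, psiList_snoc,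
      palClosure_append_of_isMaxPalPrefixBefore (reverse_psiList l) hx hP]
  have hWrev : W = Z ++ ((psiWord w).map φ).flatten.reverse :=
    calc W = W.reverse := (reverse_psiList _).symm
      _ = _ := by rw [ih, reverse_append, show Z.reverse = Z from reverse_psiList l]
  have hdrop : W.drop (P ++ μ b).length = S ++ ((psiWord w).map φ).flatten.reverse := by
    rw [hWrev, drop_append_of_le_length (hP.append_prefix.length_le)]
  rw [hdrop]
  calc W ++ μ b ++ (S ++ ((psiWord w).map φ).flatten.reverse)
      = ((psiWord w).map φ).flatten ++ (Z ++ μ b ++ S) ++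
          ((psiWord w).map φ).flatten.reverse := by rw [ih]; simp
    _ = ((psiWord w).map φ).flatten ++ φ b ++ W := by rw [← hφb, hWrev]; simp
    _ = _ := by rw [ih]; simp

theorem psiList_append_map_eq (hX : IsPrefixCode X) (hμX : ∀ b, μ b ∈ X)
    (hinj : Function.Injective μ) (hper : ∀ p, IsPeriodOf p (psiList l) → ∀ x ∈ X, x.length ≤ p)
    (hmax : ∀ b, ∃ P, IsMaxPalPrefixBefore (psiList l) (μ b) P) (w : List B) :
    psiList (l ++ w.map μ) = ((psiWord w).map (justinMorphism l μ)).flatten ++ psiList l := by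
  induction h : w.length using Nat.strong_induction_on generalizing w with
  | _ n ih =>
  subst h
  rcases w.eq_nil_or_concat' with rfl | ⟨w, b, rfl⟩
  · simp [psiWord]
  have ih_w := ih w.length (by simp) w rfl
  by_cases hb : b ∈ w
  · obtain ⟨i, hi, rfl, hlast⟩ := exists_last_getElem_eq hb
    exact psiList_append_map_snoc_of_last_occurrence hX hμX hinj hper hi hlast ih_w
      (ih _ (by simp) _ rfl)
  · obtain ⟨P, hP⟩ := hmax b
    exact psiList_append_map_snoc_of_not_mem hX hμX hinj hper hb hP ih_w

end Justin

theorem stmt13_general {A : Type*} {B : Type*}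
    (X : Set (List A)) (hX : IsMaximalPrefixCode X)
    (y : ℕ → List A)
    (μ : B → List A) (hinj : Function.Injective μ) (hran : Set.range μ = X)
    (m : ℕ) (hfull : Full X (List.ofFn fun i : Fin m => y i.1)) :
    ∀ w : List B,
      psiList ((List.ofFn fun i : Fin m => y i.1) ++ w.map μ) =
        ((psiWord w).map fun b =>
          (psiList ((List.ofFn fun i : Fin m => y i.1) ++ [μ b])).take
            ((psiList ((List.ofFn fun i : Fin m => y i.1) ++ [μ b])).length -
              (psiList (List.ofFn fun i : Fin m => y i.1)).length)).flatten
        ++ psiList (List.ofFn fun i : Fin m => y i.1) := by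
  have hμX : ∀ b, μ b ∈ X := fun b => hran ▸ Set.mem_range_self b
  exact psiList_append_map_eq hX.1 hμX hinj hfull.2.1
    (fun b => hfull.exists_isMaxPalPrefixBefore (hμX b))

/-- (Generalized Justin formula.) Let
`s = ψ_X(x₁x₂⋯)` be an `X`-AR word, `μ : B → X` a bijection, and
`z = x₁⋯x_m` with `ψ_X(z)` full. With `φ_z(b) = ψ_X(zμ(b)) ψ_X(z)⁻¹`, for every
`w ∈ B*` one has `ψ_X(zμ(w)) = φ_z(ψ(w)) ψ_X(z)`. -/
theorem stmt13 {A : Type*} {B : Type*} [Fintype A] [Fintype B]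
    (hd : 1 < Fintype.card A)
    (X : Set (List A)) (hfin : X.Finite) (hX : IsMaximalPrefixCode X)
    (y : ℕ → List A) (hy : ∀ i, y i ∈ X)
    (hpers : ∀ x ∈ X, ∀ N : ℕ, ∃ i ≥ N, y i = x)
    (μ : B → List A) (hinj : Function.Injective μ) (hran : Set.range μ = X)
    (m : ℕ) (hfull : Full X (List.ofFn fun i : Fin m => y i.1)) :
    ∀ w : List B,
      psiList ((List.ofFn fun i : Fin m => y i.1) ++ w.map μ) =
        ((psiWord w).map fun b =>
          (psiList ((List.ofFn fun i : Fin m => y i.1) ++ [μ b])).take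
            ((psiList ((List.ofFn fun i : Fin m => y i.1) ++ [μ b])).length -
              (psiList (List.ofFn fun i : Fin m => y i.1)).length)).flatten
        ++ psiList (List.ofFn fun i : Fin m => y i.1) :=
  stmt13_general X hX y μ hinj hran m hfull
end

section
/- Let s be an X-AR word. Then the factor complexity of s is linearly upper bounded: there exists an integer n₀ such that for all n ≥ n₀, p_s(n) ≤ 2·card(X)·n − card(X). -/
/-!
Write `u_m = ψ_X(y_0 ⋯ y_{m-1})` (`psiPrefix y m`), so that `u_{m+1} = (u_m y_m)⁺` and every
factor of `s` occurs in some `u_m`. Fix `n` and the first `T` with `|u_T| ≥ n`; then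
`|u_T| ≤ 2n + O(1)`. For `m ≥ T`, a factor of length `n` of `u_{m+1}` is a factor of `u_m`, or
ends inside `y_m` (at most `card X · max |x|` words), or is the reversal of one of these since
`u_{m+1}` is a palindrome, unless it starts before the longest palindromic suffix of `u_m y_m` and
ends beyond `u_m y_m`; this needs that suffix to be shorter than `n`. If `y_j = y_m` with `j < m`,
then `y_m~ u_j y_m` is a palindromic suffix of `u_m y_m`, of length `> n` once `j ≥ T`; so such
short steps carry pairwise distinct code words, there are at most `card X` of them, and each adds
fewer than `n` factors. Altogether `p_s(n) ≤ (card X + 1) n + O(1)`, which is at most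
`2 card X · n - card X` for large `n` because a maximal prefix code over at least two letters has
at least two words.
-/

open List

section MaximalPrefixCode

variable {A : Type*} {X : Set (List A)}

theorem IsMaximalPrefixCode.exists_head?_eq (hX : IsMaximalPrefixCode X) (a : A) :
    ∃ x ∈ X, x.head? = some a := by
  by_contra! h
  have hcode : IsPrefixCode (insert [a] X) := by
    refine ⟨?_, ?_⟩
    · rintro x (rfl | hx)
      · simp
      · exact hX.1.1 x hx
    · rintro x (rfl | hx) z (rfl | hz) hxz
      · rfl
      · exact absurd (List.singleton_prefix_iff_head?_eq_some.mp hxz) (h z hz)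
      · rcases List.prefix_cons_iff.mp hxz with hnil | ⟨t, rfl, -⟩
        · exact absurd hnil (hX.1.1 _ hx)
        · exact absurd rfl (h _ hx)
      · exact hX.1.2 x hx z hz hxz
  have ha : [a] ∈ X := (hX.2 _ hcode (Set.subset_insert _ _)).symm ▸ Set.mem_insert _ _
  exact h _ ha rfl

theorem IsMaximalPrefixCode.two_le_ncard [Nontrivial A] (hX : IsMaximalPrefixCode X)
    (hfin : X.Finite) : 2 ≤ X.ncard := by
  obtain ⟨a, b, hab⟩ := exists_pair_ne A
  obtain ⟨x, hx, hxa⟩ := hX.exists_head?_eq a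
  obtain ⟨z, hz, hzb⟩ := hX.exists_head?_eq b
  have hxz : x ≠ z := by
    rintro rfl
    exact hab (Option.some_injective _ (hxa.symm.trans hzb))
  calc 2 = ({x, z} : Set (List A)).ncard := (Set.ncard_pair hxz).symm
    _ ≤ X.ncard :=
      Set.ncard_le_ncard (Set.insert_subset hx (Set.singleton_subset_iff.mpr hz)) hfin

end MaximalPrefixCode

section PalClosure

variable {A : Type*}

noncomputable def palSuffixStart (w : List A) : ℕ :=
  letI : DecidablePred fun k => (w.drop k).reverse = w.drop k :=
    fun _ => Classical.propDecidable _
  Nat.find (⟨w.length, by simp⟩ : ∃ k, (w.drop k).reverse = w.drop k)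

theorem palClosure_eq_append (w : List A) :
    palClosure w = w ++ (w.take (palSuffixStart w)).reverse := rfl

theorem reverse_drop_palSuffixStart (w : List A) :
    (w.drop (palSuffixStart w)).reverse = w.drop (palSuffixStart w) := by
  let _ : DecidablePred fun k => (w.drop k).reverse = w.drop k :=
    fun _ => Classical.propDecidable _
  exact Nat.find_spec (⟨w.length, by simp⟩ : ∃ k, (w.drop k).reverse = w.drop k)

theorem palSuffixStart_le {w : List A} {k : ℕ} (h : (w.drop k).reverse = w.drop k) :
    palSuffixStart w ≤ k := by
  let _ : DecidablePred fun k => (w.drop k).reverse = w.drop k :=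
    fun _ => Classical.propDecidable _
  exact Nat.find_min' (⟨w.length, by simp⟩ : ∃ k, (w.drop k).reverse = w.drop k) h

theorem palSuffixStart_le_length (w : List A) : palSuffixStart w ≤ w.length :=
  palSuffixStart_le (by simp)

theorem palSuffixStart_add_length_le {v w : List A} (hv : v <:+ w) (hpal : v.reverse = v) :
    palSuffixStart w + v.length ≤ w.length := by
  obtain ⟨t, rfl⟩ := hv
  have : palSuffixStart (t ++ v) ≤ t.length := palSuffixStart_le (by rwa [List.drop_left])
  simp only [List.length_append]
  omega

theorem length_palClosure (w : List A) :
    (palClosure w).length = w.length + palSuffixStart w := by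
  simp [palClosure_eq_append, palSuffixStart_le_length]

end PalClosure

section Palindromization

variable {A : Type*} (y : ℕ → List A)

noncomputable def psiPrefix (m : ℕ) : List A := psiList (List.ofFn fun i : Fin m => y i)

@[simp] theorem psiPrefix_zero : psiPrefix y 0 = [] := rfl

theorem psiPrefix_succ (m : ℕ) : psiPrefix y (m + 1) = palClosure (psiPrefix y m ++ y m) := by
  unfold psiPrefix psiList
  rw [List.ofFn_succ']
  simp

theorem reverse_psiPrefix : ∀ m, (psiPrefix y m).reverse = psiPrefix y m
  | 0 => rfl
  | m + 1 => by rw [psiPrefix_succ]; exact reverse_palClosure _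

theorem append_prefix_psiPrefix_succ (m : ℕ) : psiPrefix y m ++ y m <+: psiPrefix y (m + 1) := by
  rw [psiPrefix_succ]; exact prefix_palClosure _

theorem psiPrefix_prefix_of_le {a b : ℕ} (hab : a ≤ b) : psiPrefix y a <+: psiPrefix y b := by
  induction b, hab using Nat.le_induction with
  | base => exact List.prefix_refl _
  | succ b _ ih =>
    exact ih.trans ((List.prefix_append _ _).trans (append_prefix_psiPrefix_succ y b))

theorem length_psiPrefix_succ (m : ℕ) :
    (psiPrefix y (m + 1)).length =
      (psiPrefix y m).length + (y m).length + palSuffixStart (psiPrefix y m ++ y m) := by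
  rw [psiPrefix_succ, length_palClosure, List.length_append]

theorem le_length_psiPrefix (hy : ∀ m, y m ≠ []) (m : ℕ) : m ≤ (psiPrefix y m).length := by
  induction m with
  | zero => simp
  | succ m ih =>
    have := List.length_pos_iff.mpr (hy m)
    rw [length_psiPrefix_succ]
    omega

/-- `(y m)~ u_j (y m)` is a palindromic suffix of `u_m (y m)`. -/
theorem palSuffixStart_add_le_of_eq {j m : ℕ} (hjm : j < m) (hyy : y j = y m) :
    palSuffixStart (psiPrefix y m ++ y m) + (psiPrefix y j).length + 2 * (y m).length ≤
      (psiPrefix y m).length + (y m).length := by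
  have hprefix : psiPrefix y j ++ y m <+: psiPrefix y m :=
    hyy ▸ (append_prefix_psiPrefix_succ y j).trans (psiPrefix_prefix_of_le y hjm)
  have hsuffix : (y m).reverse ++ psiPrefix y j <:+ psiPrefix y m := by
    simpa [reverse_psiPrefix] using hprefix.reverse
  have hpal : ((y m).reverse ++ psiPrefix y j ++ y m).reverse =
      (y m).reverse ++ psiPrefix y j ++ y m := by
    simp [reverse_psiPrefix]
  have := palSuffixStart_add_length_le (List.suffix_append_self_iff.mpr hsuffix) hpal
  simp only [List.length_append, List.length_reverse] at this ⊢
  omega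

end Palindromization

section Windows

variable {A : Type*}

def window (s : ℕ → A) (i n : ℕ) : List A := List.ofFn fun k : Fin n => s (i + k)

@[simp] theorem length_window (s : ℕ → A) (i n : ℕ) : (window s i n).length = n := by
  simp [window]

@[simp] theorem getElem_window (s : ℕ → A) (i n j : ℕ) (h : j < (window s i n).length) :
    (window s i n)[j] = s (i + j) := by
  simp [window]

theorem window_add (s : ℕ → A) (i a b : ℕ) :
    window s i (a + b) = window s i a ++ window s (i + a) b := by
  simp [window, List.ofFn_add, Nat.add_assoc]

theorem reverse_window {s : ℕ → A} {N : ℕ} (hs : ∀ j < N, s j = s (N - 1 - j)) {i n : ℕ}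
    (h : i + n ≤ N) : (window s i n).reverse = window s (N - n - i) n := by
  refine List.ext_getElem (by simp) fun j hj _ => ?_
  simp only [List.length_reverse, length_window] at hj
  rw [List.getElem_reverse, getElem_window, getElem_window, hs _ (by simp; omega)]
  congr 1
  simp only [length_window]
  omega

theorem complexity_le_card {s : ℕ → A} {n : ℕ} (G : Finset (List A))
    (hG : ∀ i, window s i n ∈ G) : complexity s n ≤ G.card := by
  have hsub : {u | u.length = n ∧ FactorOfInf u s} ⊆ (G : Set (List A)) := by
    rintro u ⟨rfl, i, hi⟩
    rw [Finset.mem_coe, hi]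
    exact hG i
  exact (Set.ncard_le_ncard hsub G.finite_toSet).trans_eq (Set.ncard_coe_finset G)

def endWords [DecidableEq A] (s : ℕ → A) (W : Finset (List A)) (L n : ℕ) : Finset (List A) :=
  (W ×ˢ Finset.Icc 1 L).image fun p => (window s 0 (n - p.2)).reverse ++ p.1.take p.2

theorem card_endWords_le [DecidableEq A] (s : ℕ → A) (W : Finset (List A)) (L n : ℕ) :
    (endWords s W L n).card ≤ W.card * L := by
  refine Finset.card_image_le.trans ?_
  rw [Finset.card_product, Nat.card_Icc, Nat.add_sub_cancel]

end Windows

section PsiWindows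

variable {A : Type*} {y : ℕ → List A} {s : ℕ → A}

theorem getElem_psiPrefix (hs : ∀ m, PrefixOfInf (psiPrefix y m) s) {m j : ℕ}
    (hj : j < (psiPrefix y m).length) : (psiPrefix y m)[j] = s j :=
  hs m j hj

theorem apply_eq_apply_mirror (hs : ∀ m, PrefixOfInf (psiPrefix y m) s) (m : ℕ) :
    ∀ j < (psiPrefix y m).length, s j = s ((psiPrefix y m).length - 1 - j) := by
  intro j hj
  rw [← getElem_psiPrefix hs hj, ← getElem_psiPrefix hs (m := m) (by omega)]
  have h := List.getElem_of_eq (reverse_psiPrefix y m).symm hj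
  rwa [List.getElem_reverse] at h

theorem apply_length_psiPrefix_add (hs : ∀ m, PrefixOfInf (psiPrefix y m) s) (m : ℕ) {t : ℕ}
    (ht : t < (y m).length) : s ((psiPrefix y m).length + t) = (y m)[t] := by
  have hpre := append_prefix_psiPrefix_succ y m
  have hlt : (psiPrefix y m).length + t < (psiPrefix y m ++ y m).length := by simp [ht]
  rw [← getElem_psiPrefix hs (hlt.trans_le hpre.length_le), ← hpre.getElem hlt,
    List.getElem_append_right (by omega)]
  simp

theorem window_eq_of_end_in_codeword (hs : ∀ m, PrefixOfInf (psiPrefix y m) s) (m : ℕ)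
    {i n t : ℕ} (ht : t ≤ (y m).length) (htn : t ≤ n)
    (hi : i + n = (psiPrefix y m).length + t) :
    window s i n = (window s 0 (n - t)).reverse ++ (y m).take t := by
  have hsplit : window s i n = window s i (n - t) ++ window s (psiPrefix y m).length t := by
    rw [← show i + (n - t) = (psiPrefix y m).length by omega, ← window_add,
      Nat.sub_add_cancel htn]
  have hmirror := reverse_window (apply_eq_apply_mirror hs m) (i := 0) (n := n - t) (by omega)
  have hcode : window s (psiPrefix y m).length t = (y m).take t := by
    refine List.ext_getElem (by simp [ht]) fun j hj _ => ?_
    simp only [length_window] at hj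
    rw [getElem_window, apply_length_psiPrefix_add hs m (by omega), List.getElem_take]
  rw [hsplit, hmirror, hcode, show (psiPrefix y m).length - (n - t) - 0 = i by omega]

theorem window_mem_endWords [DecidableEq A] (hs : ∀ m, PrefixOfInf (psiPrefix y m) s)
    {W : Finset (List A)} {L m i n : ℕ} (hW : y m ∈ W) (hL : (y m).length ≤ L) (hLn : L ≤ n)
    (h1 : (psiPrefix y m).length < i + n) (h2 : i + n ≤ (psiPrefix y m).length + (y m).length) :
    window s i n ∈ endWords s W L n := by
  rw [window_eq_of_end_in_codeword hs m (i := i) (n := n)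
    (t := i + n - (psiPrefix y m).length) (by omega) (by omega) (by omega)]
  exact Finset.mem_image.mpr ⟨(y m, i + n - (psiPrefix y m).length), Finset.mem_product.mpr
    ⟨hW, Finset.mem_Icc.mpr ⟨by omega, by omega⟩⟩, rfl⟩

end PsiWindows

section Complexity

variable {A : Type*} {y : ℕ → List A} {s : ℕ → A}

/-- A window of `u_{m+1}` that neither lies in `u_m y_m` nor starts before the longest palindromic
suffix of `u_m y_m` is, by the palindromicity of `u_{m+1}`, the reversal of a window of
`u_m y_m`. -/
theorem window_mem_of_step_cases (hs : ∀ m, PrefixOfInf (psiPrefix y m) s) {G : Set (List A)}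
    {n T : ℕ} (hbase : ∀ i, i + n ≤ (psiPrefix y T).length → window s i n ∈ G)
    (hend : ∀ m i, (psiPrefix y m).length < i + n →
      i + n ≤ (psiPrefix y m).length + (y m).length →
      window s i n ∈ G ∧ (window s i n).reverse ∈ G)
    (hcentred : ∀ m ≥ T, ∀ i, (psiPrefix y m).length + (y m).length < i + n →
      i < palSuffixStart (psiPrefix y m ++ y m) → window s i n ∈ G) :
    ∀ m ≥ T, ∀ i, i + n ≤ (psiPrefix y m).length → window s i n ∈ G := by
  intro m hm
  induction m, hm using Nat.le_induction with
  | base => exact hbase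
  | succ m hTm ih =>
    intro i hi
    have hlen := length_psiPrefix_succ y m
    have hc := palSuffixStart_le_length (psiPrefix y m ++ y m)
    rw [List.length_append] at hc
    rcases le_or_gt (i + n) (psiPrefix y m).length with hin | hout
    · exact ih i hin
    rcases le_or_gt (i + n) ((psiPrefix y m).length + (y m).length) with hcode | hbeyond
    · exact (hend m i hout hcode).1
    rcases lt_or_ge i (palSuffixStart (psiPrefix y m ++ y m)) with hcentre | hright
    · exact hcentred m hTm i hbeyond hcentre
    set j := (psiPrefix y (m + 1)).length - n - i
    have hwin : window s i n = (window s j n).reverse := by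
      rw [reverse_window (apply_eq_apply_mirror hs (m + 1)) (by omega),
        show (psiPrefix y (m + 1)).length - n - j = i by omega]
    rw [hwin]
    rcases le_or_gt (j + n) (psiPrefix y m).length with hj | hj
    · rw [reverse_window (apply_eq_apply_mirror hs m) hj]
      exact ih _ (by omega)
    · exact (hend m j hj (by omega)).2

variable (y) in
/-- The steps at which the longest palindromic suffix of `u_m y_m` is shorter than `n`. -/
def shortSteps (n : ℕ) : Set ℕ :=
  {m | n ≤ (psiPrefix y m).length ∧
    (psiPrefix y m).length + (y m).length < n + palSuffixStart (psiPrefix y m ++ y m)}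

variable (y) in
theorem injOn_shortSteps (n : ℕ) : Set.InjOn y (shortSteps y n) := by
  have key {p q : ℕ} (hpq : p < q) (hp : p ∈ shortSteps y n) (hq : q ∈ shortSteps y n) :
      y p ≠ y q := fun hyy => by
    have := palSuffixStart_add_le_of_eq y hpq hyy
    simp only [shortSteps, Set.mem_ofPred_eq] at hp hq
    omega
  intro p hp q hq hyy
  by_contra hne
  rcases Nat.lt_or_gt_of_ne hne with h | h
  · exact key h hp hq hyy
  · exact key h hq hp hyy.symm

theorem finite_shortSteps {X : Set (List A)} (hfin : X.Finite) (hy : ∀ m, y m ∈ X) (n : ℕ) :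
    (shortSteps y n).Finite :=
  Set.Finite.of_finite_image (hfin.subset (Set.image_subset_iff.mpr fun m _ => hy m))
    (injOn_shortSteps y n)

theorem ncard_shortSteps_le {X : Set (List A)} (hfin : X.Finite) (hy : ∀ m, y m ∈ X) (n : ℕ) :
    (shortSteps y n).ncard ≤ X.ncard :=
  Set.ncard_le_ncard_of_injOn y (fun m _ => hy m) (injOn_shortSteps y n) hfin

variable (y) in
noncomputable def centredWindows [DecidableEq A] (s : ℕ → A) (S : Finset ℕ) (n : ℕ) :
    Finset (List A) :=
  S.biUnion fun m => (Finset.Ioo ((psiPrefix y m).length + (y m).length - n)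
    (palSuffixStart (psiPrefix y m ++ y m))).image (window s · n)

variable (y) in
theorem card_centredWindows_le [DecidableEq A] (s : ℕ → A) (S : Finset ℕ) (n : ℕ) :
    (centredWindows y s S n).card ≤ S.card * n := by
  refine Finset.card_biUnion_le_card_mul _ _ n fun m _ => Finset.card_image_le.trans ?_
  have := palSuffixStart_le_length (psiPrefix y m ++ y m)
  rw [List.length_append] at this
  rw [Nat.card_Ioo]
  omega

theorem complexity_le_of_le_length_psiPrefix (hs : ∀ m, PrefixOfInf (psiPrefix y m) s)
    {X : Set (List A)} (hfin : X.Finite) (hy : ∀ m, y m ∈ X) (hne : ∀ m, y m ≠ []) {L : ℕ}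
    (hL : ∀ x ∈ X, x.length ≤ L) {n T : ℕ} (hLn : L ≤ n)
    (hT : n ≤ (psiPrefix y T).length) :
    complexity s n ≤ ((psiPrefix y T).length - n + 1) + 2 * (X.ncard * L) + X.ncard * n := by
  classical
  set S := (finite_shortSteps hfin hy n).toFinset
  set inner := (Finset.range ((psiPrefix y T).length - n + 1)).image (window s · n)
  set ends := endWords s hfin.toFinset L n
  have hcover (i : ℕ) :
      window s i n ∈ inner ∪ (ends ∪ ends.image List.reverse) ∪ centredWindows y s S n := by
    refine window_mem_of_step_cases hs (n := n) (T := T)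
      (G := ↑(inner ∪ (ends ∪ ends.image List.reverse) ∪ centredWindows y s S n))
      (fun i hi => ?_) (fun m i h1 h2 => ?_) (fun m hm i h1 h2 => ?_) (max T (i + n))
      (le_max_left _ _) i ((le_max_right _ _).trans (le_length_psiPrefix y hne _))
      <;> simp only [Finset.coe_union, Set.mem_union, Finset.mem_coe]
    · exact Or.inl (Or.inl (Finset.mem_image_of_mem _ (Finset.mem_range.mpr (by omega))))
    · have hw := window_mem_endWords hs (hfin.mem_toFinset.mpr (hy m)) (hL _ (hy m)) hLn h1 h2
      exact ⟨Or.inl (Or.inr (Or.inl hw)),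
        Or.inl (Or.inr (Or.inr (Finset.mem_image_of_mem _ hw)))⟩
    · have hnm : n ≤ (psiPrefix y m).length := hT.trans (psiPrefix_prefix_of_le y hm).length_le
      have hmS : m ∈ S := (Set.Finite.mem_toFinset _).mpr ⟨hnm, by omega⟩
      exact Or.inr (Finset.mem_biUnion.mpr
        ⟨m, hmS, Finset.mem_image_of_mem _ (Finset.mem_Ioo.mpr ⟨by omega, h2⟩)⟩)
  refine (complexity_le_card _ hcover).trans ?_
  have hinner : inner.card ≤ (psiPrefix y T).length - n + 1 :=
    Finset.card_image_le.trans (by simp)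
  have hends : ends.card ≤ X.ncard * L := by
    simpa [← Set.ncard_eq_toFinset_card X hfin] using card_endWords_le s hfin.toFinset L n
  have hcentred : (centredWindows y s S n).card ≤ X.ncard * n := by
    refine (card_centredWindows_le y s S n).trans (Nat.mul_le_mul_right n ?_)
    rw [← Set.ncard_eq_toFinset_card _ (finite_shortSteps hfin hy n)]
    exact ncard_shortSteps_le hfin hy n
  have := Finset.card_image_le (s := ends) (f := List.reverse)
  have :=
    Finset.card_union_le (inner ∪ (ends ∪ ends.image List.reverse)) (centredWindows y s S n)
  have := Finset.card_union_le inner (ends ∪ ends.image List.reverse)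
  have := Finset.card_union_le ends (ends.image List.reverse)
  omega

end Complexity

theorem exists_length_psiPrefix_between {A : Type*} {y : ℕ → List A} (hne : ∀ m, y m ≠ [])
    {L : ℕ} (hL : ∀ m, (y m).length ≤ L) (n : ℕ) :
    ∃ T, n ≤ (psiPrefix y T).length ∧ (psiPrefix y T).length ≤ 2 * n + 2 * L := by
  classical
  have hex : ∃ T, n ≤ (psiPrefix y T).length := ⟨n, le_length_psiPrefix y hne n⟩
  refine ⟨Nat.find hex, Nat.find_spec hex, ?_⟩
  cases h : Nat.find hex with
  | zero => simp
  | succ T =>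
    have hT : (psiPrefix y T).length < n := not_le.mp (Nat.find_min hex (by omega))
    have := palSuffixStart_le_length (psiPrefix y T ++ y T)
    rw [List.length_append] at this
    have := hL T
    rw [length_psiPrefix_succ]
    omega

theorem stmt15_general {A : Type*} [Fintype A] (hd : 1 < Fintype.card A)
    (X : Set (List A)) (hfin : X.Finite) (hX : IsMaximalPrefixCode X)
    (y : ℕ → List A) (hy : ∀ i, y i ∈ X)
    (s : ℕ → A)
    (hs : ∀ n : ℕ, PrefixOfInf (psiList (List.ofFn fun i : Fin n => y i.1)) s) :
    ∃ n₀ : ℕ, ∀ n : ℕ, n ≥ n₀ →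
      (complexity s n : ℤ) ≤ 2 * (X.ncard : ℤ) * n - (X.ncard : ℤ) := by
  have : Nontrivial A := Fintype.one_lt_card_iff_nontrivial.mp hd
  have hk : 2 ≤ X.ncard := hX.two_le_ncard hfin
  obtain ⟨L, hL⟩ : ∃ L, ∀ x ∈ X, x.length ≤ L :=
    (hfin.image List.length).bddAbove.imp fun _ hL _ hx => hL (Set.mem_image_of_mem _ hx)
  have hne : ∀ m, y m ≠ [] := fun m => hX.1.1 _ (hy m)
  refine ⟨2 * (X.ncard * L) + 2 * L + X.ncard + 1, fun n hn => ?_⟩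
  obtain ⟨T, hnT, hTn⟩ := exists_length_psiPrefix_between hne (fun m => hL _ (hy m)) n
  have hp := complexity_le_of_le_length_psiPrefix hs hfin hy hne hL (by omega) hnT
  have hkn : 2 * n ≤ X.ncard * n := Nat.mul_le_mul_right n hk
  have hbound : complexity s n + X.ncard ≤ 2 * (X.ncard * n) := by omega
  zify at hbound
  linarith

/-- The factor complexity of an `X`-AR word `s` satisfies
`p_s(n) ≤ 2·card(X)·n − card(X)` for all sufficiently large `n`. -/
theorem stmt15 {A : Type*} [Fintype A] (hd : 1 < Fintype.card A)
    (X : Set (List A)) (hfin : X.Finite) (hX : IsMaximalPrefixCode X)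
    (y : ℕ → List A) (hy : ∀ i, y i ∈ X)
    (hpers : ∀ x ∈ X, ∀ N : ℕ, ∃ i ≥ N, y i = x)
    (s : ℕ → A)
    (hs : ∀ n : ℕ, PrefixOfInf (psiList (List.ofFn fun i : Fin n => y i.1)) s) :
    ∃ n₀ : ℕ, ∀ n : ℕ, n ≥ n₀ →
      (complexity s n : ℤ) ≤ 2 * (X.ncard : ℤ) * n - (X.ncard : ℤ) :=
  stmt15_general hd X hfin hX y hy s hs
end

section
/- If X is a finite maximal prefix code over A, then ψ_X is weakly conservative: for every t ∈ X^ω, ψ_X(t) ∈ X^ω, i.e., the infinite word ψ_X(t) is an infinite concatenation of elements of X. -/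
open List

lemma aux_comp {A : Type*} (X : Set (List A)) (hX : IsMaximalPrefixCode X)
    (w : List A) (hw : w ≠ []) : ∃ x ∈ X, x <+: w ∨ w <+: x := by
  by_contra h
  push_neg at h
  have hY : IsPrefixCode (insert w X) := by
    constructor
    · rintro x (rfl | hx)
      · exact hw
      · exact hX.1.1 x hx
    · rintro x (rfl | hx) y (rfl | hy) hp
      · rfl
      · exact absurd hp (h y hy).2
      · exact absurd hp (h x hx).1
      · exact hX.1.2 x hx y hy hp
  have hEq := hX.2 _ hY (Set.subset_insert w X)
  have hwX : w ∈ X := hEq ▸ Set.mem_insert w X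
  exact (h w hwX).1 (List.prefix_refl w)

lemma aux_pref {A : Type*} (X : Set (List A)) (hfin : X.Finite)
    (hX : IsMaximalPrefixCode X) (hne : X.Nonempty) (σ : ℕ → A) :
    ∃ x ∈ X, ∀ i : ℕ, ∀ h : i < x.length, x.get ⟨i, h⟩ = σ i := by
  classical
  have hFne : hfin.toFinset.Nonempty := by
    obtain ⟨x, hx⟩ := hne; exact ⟨x, hfin.mem_toFinset.2 hx⟩
  set M := (hfin.toFinset.image List.length).max' (hFne.image _) with hM
  have hle : ∀ x ∈ X, x.length ≤ M := fun x hx =>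
    Finset.le_max' _ _ (Finset.mem_image_of_mem _ (hfin.mem_toFinset.2 hx))
  have hMpos : 0 < M := by
    obtain ⟨x, hx⟩ := hne
    have := hle x hx
    have hx0 : x ≠ [] := hX.1.1 x hx
    have : 0 < x.length := List.length_pos_iff.2 hx0
    omega
  set w : List A := (List.range M).map σ with hw
  have hwlen : w.length = M := by simp [hw]
  have hwne : w ≠ [] := by
    intro h; rw [h] at hwlen; simp at hwlen; omega
  obtain ⟨x, hx, hcomp⟩ := aux_comp X hX w hwne
  have hpre : x <+: w := by
    rcases hcomp with h | h
    · exact h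
    · have : w = x := h.eq_of_length_le (by rw [hwlen]; exact hle x hx)
      rw [← this]
  refine ⟨x, hx, fun i h => ?_⟩
  have h2 : i < w.length := lt_of_lt_of_le h hpre.length_le
  have := hpre.getElem h
  simp only [List.get_eq_getElem]
  rw [this]
  simp [hw]


/-- If `X` is a finite maximal prefix code, then `ψ_X` is
weakly conservative: for every `t ∈ X^ω`, `ψ_X(t) ∈ X^ω`. -/
theorem stmt19 {A : Type*} [Fintype A] (X : Set (List A)) (hfin : X.Finite)
    (hX : IsMaximalPrefixCode X)
    (t : ℕ → List A) (ht : ∀ i, t i ∈ X)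
    (s : ℕ → A)
    (hs : ∀ n : ℕ, PrefixOfInf (psiList (List.ofFn fun i : Fin n => t i.1)) s) :
    ∃ u : ℕ → List A, (∀ i, u i ∈ X) ∧
      ∀ n : ℕ, PrefixOfInf ((List.ofFn fun i : Fin n => u i.1).flatten) s := by
  have hne : X.Nonempty := ⟨t 0, ht 0⟩
  classical
  have hpick : ∀ c : ℕ, ∃ x ∈ X, ∀ i : ℕ, ∀ h : i < x.length, x.get ⟨i, h⟩ = s (c + i) :=
    fun c => aux_pref X hfin hX hne (fun k => s (c + k))
  choose pick hmem hpref using hpick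
  set o : ℕ → ℕ := fun n => Nat.rec 0 (fun _ c => c + (pick c).length) n with ho
  refine ⟨fun n => pick (o n), fun n => hmem _, ?_⟩
  have key : ∀ n, (List.ofFn fun i : Fin n => pick (o i.1)).flatten
      = (List.range (o n)).map s := by
    intro n
    induction n with
    | zero => simp [ho]
    | succ n ih =>
      have hstep : o (n + 1) = o n + (pick (o n)).length := rfl
      rw [List.ofFn_succ']
      simp only [List.concat_eq_append, List.flatten_append]
      have hx : pick (o n) = (List.range (pick (o n)).length).map (fun k => s (o n + k)) := by
        apply List.ext_get
        · simp
        · intro i h1 h2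
          have := hpref (o n) i h1
          simpa using this
      rw [hstep, List.range_add, List.map_append]
      simp only [Fin.coe_castSucc]
      rw [ih]
      simp only [List.flatten_cons, List.flatten_nil, List.append_nil, List.map_map]
      simp only [Fin.val_last]
      conv_lhs => rw [hx]
      rfl
  intro n i h
  have h2 : i < ((List.range (o n)).map s).length := by rw [← key n]; exact h
  simp only [List.get_eq_getElem]
  have : (List.ofFn fun i : Fin n => pick (o i.1)).flatten[i]'h
      = ((List.range (o n)).map s)[i]'h2 := by
    congr 1; exact key n
  rw [this]
  simp
end
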